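/- Let n ≥ 1 and let q ∈ ℍ with Im q ≠ 0. Then the Laplacian of the monomial function x ↦ xⁿ at q satisfies Δ(x ↦ xⁿ)(q) = −(Im q)⁻¹·(2n·q^{n−1} + (Im q)⁻¹·(q̄ⁿ − qⁿ)). -/

import Mathlib

noncomputable section
open Quaternion

/-- The imaginary units of `ℍ`. -/
def e1 : ℍ[ℝ] := ⟨0, 1, 0, 0⟩
def e2 : ℍ[ℝ] := ⟨0, 0, 1, 0⟩
def e3 : ℍ[ℝ] := ⟨0, 0, 0, 1⟩

/-- The Laplacian `Δf = ∂₀²f + ∂₁²f + ∂₂²f + ∂₃²f` on `ℍ ≅ ℝ⁴`. -/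
def Lap (f : ℍ[ℝ] → ℍ[ℝ]) (q : ℍ[ℝ]) : ℍ[ℝ] :=
  fderiv ℝ (fun x => fderiv ℝ f x 1) q 1 + fderiv ℝ (fun x => fderiv ℝ f x e1) q e1 +
    fderiv ℝ (fun x => fderiv ℝ f x e2) q e2 + fderiv ℝ (fun x => fderiv ℝ f x e3) q e3

/-! ### Auxiliary lemmas -/

section Aux

open Finset ContinuousLinearMap

/-- First derivative of the quaternionic power function, as a continuous linear map. -/
def Dpow (n : ℕ) (q : ℍ[ℝ]) : ℍ[ℝ] →L[ℝ] ℍ[ℝ] :=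
  ∑ i ∈ Finset.range n, ContinuousLinearMap.mulLeftRight ℝ ℍ[ℝ] (q ^ i) (q ^ (n - 1 - i))

lemma Dpow_apply (n : ℕ) (q v : ℍ[ℝ]) :
    Dpow n q v = ∑ i ∈ Finset.range n, q ^ i * v * q ^ (n - 1 - i) := by
  simp [Dpow]

lemma hasFDerivAt_npow (n : ℕ) (q : ℍ[ℝ]) :
    HasFDerivAt (fun x : ℍ[ℝ] => x ^ n) (Dpow n q) q := by
  induction n with
  | zero => simpa [Dpow] using hasFDerivAt_const (1 : ℍ[ℝ]) q
  | succ n ih =>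
      have h : HasFDerivAt (fun x : ℍ[ℝ] => x ^ (n + 1))
          (q ^ n • ContinuousLinearMap.id ℝ ℍ[ℝ] + (Dpow n q).smulRight q) q := by
        have h' := ih.mul' (hasFDerivAt_id q)
        have e' : MulOpposite.op (id q) • Dpow n q = (Dpow n q).smulRight q := by
          refine ContinuousLinearMap.ext fun v => ?_
          simp
        rw [e'] at h'
        rw [show (fun x : ℍ[ℝ] => x ^ (n + 1)) = (fun x => x ^ n) * id from
          funext fun x => by simp [pow_succ]]
        exact h'
      have e : Dpow (n + 1) q = q ^ n • ContinuousLinearMap.id ℝ ℍ[ℝ] + (Dpow n q).smulRight q := by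
        refine ContinuousLinearMap.ext fun v => ?_
        rw [Dpow_apply, Finset.sum_range_succ]
        simp only [Nat.add_sub_cancel, Nat.sub_self, pow_zero, mul_one,
          ContinuousLinearMap.add_apply, ContinuousLinearMap.smul_apply,
          ContinuousLinearMap.coe_id', id_eq, ContinuousLinearMap.smulRight_apply,
          smul_eq_mul, Dpow_apply]
        rw [add_comm, Finset.sum_mul]
        have : ∀ i ∈ Finset.range n, q ^ i * v * q ^ (n - 1 - i) * q = q ^ i * v * q ^ (n - i) := by
          intro i hi
          rw [Finset.mem_range] at hi
          rw [mul_assoc (q ^ i * v), ← pow_succ]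
          congr 2
          omega
        rw [Finset.sum_congr rfl this]
      rw [e]; exact h

lemma hasFDerivAt_F (n : ℕ) (v q : ℍ[ℝ]) :
    HasFDerivAt (fun x : ℍ[ℝ] => ∑ i ∈ Finset.range n, x ^ i * v * x ^ (n - 1 - i))
      (∑ i ∈ Finset.range n, ((q ^ i * v) • Dpow (n - 1 - i) q
        + ((Dpow i q).smulRight v).smulRight (q ^ (n - 1 - i)))) q := by
  apply HasFDerivAt.fun_sum
  intro i _
  have h' := ((hasFDerivAt_npow i q).mul_const' v).mul' (hasFDerivAt_npow (n - 1 - i) q)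
  have e' : MulOpposite.op (q ^ (n - 1 - i)) • MulOpposite.op v • Dpow i q
      = ((Dpow i q).smulRight v).smulRight (q ^ (n - 1 - i)) := by
    refine ContinuousLinearMap.ext fun w => ?_
    simp
  rw [e'] at h'
  exact h'

lemma fderiv_fderiv (n : ℕ) (q v : ℍ[ℝ]) :
    fderiv ℝ (fun x => fderiv ℝ (fun y : ℍ[ℝ] => y ^ n) x v) q v
      = ∑ i ∈ Finset.range n,
          (q ^ i * v * ∑ c ∈ Finset.range (n - 1 - i), q ^ c * v * q ^ (n - 1 - i - 1 - c)
            + (∑ a ∈ Finset.range i, q ^ a * v * q ^ (i - 1 - a)) * v * q ^ (n - 1 - i)) := by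
  have h1 : (fun x => fderiv ℝ (fun y : ℍ[ℝ] => y ^ n) x v)
      = fun x => ∑ i ∈ Finset.range n, x ^ i * v * x ^ (n - 1 - i) := by
    funext x
    rw [(hasFDerivAt_npow n x).fderiv, Dpow_apply]
  rw [h1, (hasFDerivAt_F n v q).fderiv]
  simp only [ContinuousLinearMap.sum_apply, ContinuousLinearMap.add_apply,
    ContinuousLinearMap.smul_apply, ContinuousLinearMap.smulRight_apply, smul_eq_mul,
    Dpow_apply]

@[simp] lemma e1_re : e1.re = 0 := rfl
@[simp] lemma e1_imI : e1.imI = 1 := rfl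
@[simp] lemma e1_imJ : e1.imJ = 0 := rfl
@[simp] lemma e1_imK : e1.imK = 0 := rfl
@[simp] lemma e2_re : e2.re = 0 := rfl
@[simp] lemma e2_imI : e2.imI = 0 := rfl
@[simp] lemma e2_imJ : e2.imJ = 1 := rfl
@[simp] lemma e2_imK : e2.imK = 0 := rfl
@[simp] lemma e3_re : e3.re = 0 := rfl
@[simp] lemma e3_imI : e3.imI = 0 := rfl
@[simp] lemma e3_imJ : e3.imJ = 0 := rfl
@[simp] lemma e3_imK : e3.imK = 1 := rfl

lemma sand1 (A B C : ℍ[ℝ]) :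
    (A * 1) * ((B * 1) * C) + (A * e1) * ((B * e1) * C) + (A * e2) * ((B * e2) * C)
      + (A * e3) * ((B * e3) * C) = (-2 : ℝ) • (A * star B * C) := by
  ext <;> simp <;> ring

lemma sand2 (A B C : ℍ[ℝ]) :
    ((A * 1) * B) * 1 * C + ((A * e1) * B) * e1 * C + ((A * e2) * B) * e2 * C
      + ((A * e3) * B) * e3 * C = (-2 : ℝ) • (A * star B * C) := by
  ext <;> simp <;> ring

lemma tri_comm {M : Type*} [AddCommMonoid M] (k n : ℕ) (hkn : k ≤ n) (f : ℕ → M) :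
    ∑ i ∈ Finset.range n, ∑ c ∈ Finset.range (k - i), f c
      = ∑ c ∈ Finset.range k, (k - c) • f c := by
  have h1 : ∑ i ∈ Finset.range n, ∑ c ∈ Finset.range (k - i), f c
      = ∑ i ∈ Finset.range k, ∑ c ∈ Finset.range (k - i), f c := by
    rw [← Finset.sum_subset (Finset.range_subset_range.2 hkn)]
    intro i hi hik
    simp only [Finset.mem_range] at hi hik
    have : k - i = 0 := by omega
    simp [this]
  rw [h1]
  have h2 : ∑ i ∈ Finset.range k, ∑ c ∈ Finset.range (k - i), f c
      = ∑ c ∈ Finset.range k, ∑ _i ∈ Finset.range (k - c), f c := by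
    rw [Finset.sum_sigma', Finset.sum_sigma']
    refine Finset.sum_nbij' (fun x => ⟨x.2, x.1⟩) (fun x => ⟨x.2, x.1⟩) ?_ ?_
      (fun _ _ => rfl) (fun _ _ => rfl) (fun _ _ => rfl) <;>
      simp only [Finset.mem_sigma, Finset.mem_range, Sigma.forall] <;> (intro a b h; omega)
  rw [h2]
  exact Finset.sum_congr rfl fun c _ => by rw [Finset.sum_const, Finset.card_range]

lemma lap_pow (n : ℕ) (q : ℍ[ℝ]) :
    Lap (fun x => x ^ n) q
      = (-4 : ℝ) • ∑ m ∈ Finset.range (n - 1),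
          (m + 1) • (q ^ m * (star q) ^ (n - 1 - 1 - m)) := by
  have hcom : Commute q (star q) := by
    unfold Commute SemiconjBy
    ext <;> simp <;> ring
  set f : ℕ → ℍ[ℝ] := fun c => (-2 : ℝ) • (q ^ (n - 2 - c) * (star q) ^ c) with hf
  have step1 : ∀ i ∈ Finset.range n,
      (q ^ i * 1 * ∑ c ∈ Finset.range (n - 1 - i), q ^ c * 1 * q ^ (n - 1 - i - 1 - c)
        + (∑ a ∈ Finset.range i, q ^ a * 1 * q ^ (i - 1 - a)) * 1 * q ^ (n - 1 - i))
      + (q ^ i * e1 * ∑ c ∈ Finset.range (n - 1 - i), q ^ c * e1 * q ^ (n - 1 - i - 1 - c)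
        + (∑ a ∈ Finset.range i, q ^ a * e1 * q ^ (i - 1 - a)) * e1 * q ^ (n - 1 - i))
      + (q ^ i * e2 * ∑ c ∈ Finset.range (n - 1 - i), q ^ c * e2 * q ^ (n - 1 - i - 1 - c)
        + (∑ a ∈ Finset.range i, q ^ a * e2 * q ^ (i - 1 - a)) * e2 * q ^ (n - 1 - i))
      + (q ^ i * e3 * ∑ c ∈ Finset.range (n - 1 - i), q ^ c * e3 * q ^ (n - 1 - i - 1 - c)
        + (∑ a ∈ Finset.range i, q ^ a * e3 * q ^ (i - 1 - a)) * e3 * q ^ (n - 1 - i))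
      = ∑ c ∈ Finset.range (n - 1 - i), f c + ∑ a ∈ Finset.range i, f a := by
    intro i hi
    rw [Finset.mem_range] at hi
    have hP : (q ^ i * 1 * ∑ c ∈ Finset.range (n - 1 - i), q ^ c * 1 * q ^ (n - 1 - i - 1 - c))
        + (q ^ i * e1 * ∑ c ∈ Finset.range (n - 1 - i), q ^ c * e1 * q ^ (n - 1 - i - 1 - c))
        + (q ^ i * e2 * ∑ c ∈ Finset.range (n - 1 - i), q ^ c * e2 * q ^ (n - 1 - i - 1 - c))
        + (q ^ i * e3 * ∑ c ∈ Finset.range (n - 1 - i), q ^ c * e3 * q ^ (n - 1 - i - 1 - c))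
        = ∑ c ∈ Finset.range (n - 1 - i), f c := by
      rw [Finset.mul_sum, Finset.mul_sum, Finset.mul_sum, Finset.mul_sum,
        ← Finset.sum_add_distrib, ← Finset.sum_add_distrib, ← Finset.sum_add_distrib]
      refine Finset.sum_congr rfl fun c hc => ?_
      rw [Finset.mem_range] at hc
      have h1 := sand1 (q ^ i) (q ^ c) (q ^ (n - 1 - i - 1 - c))
      rw [h1, hf]
      simp only
      rw [star_pow, mul_assoc, (hcom.symm.pow_pow c (n - 1 - i - 1 - c)).eq, ← mul_assoc,
        ← pow_add]
      have : i + (n - 1 - i - 1 - c) = n - 2 - c := by omega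
      rw [this]
    have hQ : ((∑ a ∈ Finset.range i, q ^ a * 1 * q ^ (i - 1 - a)) * 1 * q ^ (n - 1 - i))
        + ((∑ a ∈ Finset.range i, q ^ a * e1 * q ^ (i - 1 - a)) * e1 * q ^ (n - 1 - i))
        + ((∑ a ∈ Finset.range i, q ^ a * e2 * q ^ (i - 1 - a)) * e2 * q ^ (n - 1 - i))
        + ((∑ a ∈ Finset.range i, q ^ a * e3 * q ^ (i - 1 - a)) * e3 * q ^ (n - 1 - i))
        = ∑ a ∈ Finset.range i, f a := by
      rw [Finset.sum_mul, Finset.sum_mul, Finset.sum_mul, Finset.sum_mul,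
        Finset.sum_mul, Finset.sum_mul, Finset.sum_mul, Finset.sum_mul,
        ← Finset.sum_add_distrib, ← Finset.sum_add_distrib, ← Finset.sum_add_distrib]
      rw [← Finset.sum_range_reflect f i]
      refine Finset.sum_congr rfl fun a ha => ?_
      rw [Finset.mem_range] at ha
      have h2 := sand2 (q ^ a) (q ^ (i - 1 - a)) (q ^ (n - 1 - i))
      rw [h2, hf]
      simp only
      rw [star_pow, mul_assoc, (hcom.symm.pow_pow (i - 1 - a) (n - 1 - i)).eq, ← mul_assoc,
        ← pow_add]
      have h3 : a + (n - 1 - i) = n - 2 - (i - 1 - a) := by omega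
      rw [h3]
    rw [← hP, ← hQ]
    abel
  simp only [Lap]
  rw [fderiv_fderiv n q 1, fderiv_fderiv n q e1, fderiv_fderiv n q e2, fderiv_fderiv n q e3,
    ← Finset.sum_add_distrib, ← Finset.sum_add_distrib, ← Finset.sum_add_distrib,
    Finset.sum_congr rfl step1, Finset.sum_add_distrib]
  have hrefl : ∑ i ∈ Finset.range n, ∑ a ∈ Finset.range i, f a
      = ∑ i ∈ Finset.range n, ∑ c ∈ Finset.range (n - 1 - i), f c := by
    rw [← Finset.sum_range_reflect (fun i => ∑ a ∈ Finset.range i, f a) n]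
  rw [hrefl, tri_comm (n - 1) n (by omega) f]
  rw [← Finset.sum_range_reflect (fun c => (n - 1 - c) • f c) (n - 1)]
  have hc : ∀ m ∈ Finset.range (n - 1),
      (n - 1 - (n - 1 - 1 - m)) • f (n - 1 - 1 - m)
        = (-2 : ℝ) • ((m + 1) • (q ^ m * (star q) ^ (n - 1 - 1 - m))) := by
    intro m hm
    rw [Finset.mem_range] at hm
    have h1 : n - 1 - (n - 1 - 1 - m) = m + 1 := by omega
    have h2 : n - 2 - (n - 1 - 1 - m) = m := by omega
    rw [h1, hf]
    simp only
    rw [h2, smul_comm]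
  rw [Finset.sum_congr rfl hc, ← Finset.smul_sum]
  rw [← add_smul]
  norm_num

lemma key {A : Type*} [CommRing A] (x y : A) (k : ℕ) :
    (x - y) ^ 2 * ∑ m ∈ Finset.range k, (m + 1) • (x ^ m * y ^ (k - 1 - m))
      = (k + 1) • ((x - y) * x ^ k) + y ^ (k + 1) - x ^ (k + 1) := by
  induction k with
  | zero => simp
  | succ k ih =>
      have hS : ∑ m ∈ Finset.range (k + 1), (m + 1) • (x ^ m * y ^ (k + 1 - 1 - m))
          = y * ∑ m ∈ Finset.range k, (m + 1) • (x ^ m * y ^ (k - 1 - m)) + (k + 1) • x ^ k := by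
        rw [Finset.sum_range_succ, Finset.mul_sum]
        congr 1
        · apply Finset.sum_congr rfl
          intro m hm
          rw [Finset.mem_range] at hm
          have h1 : k + 1 - 1 - m = (k - 1 - m) + 1 := by omega
          rw [h1, mul_smul_comm, pow_succ]
          ring_nf
        · simp
      rw [hS, mul_add, ← mul_assoc, mul_comm ((x - y) ^ 2) y, mul_assoc, ih]
      simp only [nsmul_eq_mul, Nat.cast_add, Nat.cast_one]
      ring

lemma star_eq (q : ℍ[ℝ]) : star q = ((2 * q.re : ℝ) : ℍ[ℝ]) - q := by
  ext <;> simp <;> ring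

lemma keyq (q : ℍ[ℝ]) (k : ℕ) :
    (q - star q) ^ 2 * ∑ m ∈ Finset.range k, (m + 1) • (q ^ m * (star q) ^ (k - 1 - m))
      = (k + 1) • ((q - star q) * q ^ k) + (star q) ^ (k + 1) - q ^ (k + 1) := by
  have H := key (Polynomial.X : Polynomial ℝ) (Polynomial.C (2 * q.re) - Polynomial.X) k
  have H2 := congrArg (Polynomial.aeval q) H
  simp only [map_sub, map_add, map_mul, map_pow, map_sum, map_nsmul, Polynomial.aeval_X,
    Polynomial.aeval_C, Quaternion.algebraMap_def] at H2
  have hst : ((2 : ℝ) : ℍ[ℝ]) * ((q.re : ℝ) : ℍ[ℝ]) - q = star q := by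
    rw [star_eq]; push_cast; ring
  rw [hst] at H2
  exact H2

lemma him (q : ℍ[ℝ]) : Quaternion.im q = (2⁻¹ : ℝ) • (q - star q) := by
  ext <;> simp <;> ring

end Aux

/-- Closed formula for the Laplacian of the quaternionic monomial `qⁿ` off the reals. -/
theorem laplacian_monomial (n : ℕ) (hn : 1 ≤ n) (q : ℍ[ℝ]) (hq : Quaternion.im q ≠ 0) :
    Lap (fun x => x ^ n) q =
      -(Quaternion.im q)⁻¹ *
        ((2 * (n : ℝ)) • q ^ (n - 1) + (Quaternion.im q)⁻¹ * ((star q) ^ n - q ^ n)) := by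
  have hk : n - 1 + 1 = n := by omega
  have hkey := keyq q (n - 1)
  rw [hk] at hkey
  rw [lap_pow n q]
  set S := ∑ m ∈ Finset.range (n - 1), (m + 1) • (q ^ m * (star q) ^ (n - 1 - 1 - m)) with hS
  refine mul_left_cancel₀ hq (mul_left_cancel₀ hq ?_)
  have hLside : Quaternion.im q * (Quaternion.im q * ((-4 : ℝ) • S))
      = -((q - star q) ^ 2 * S) := by
    rw [him]
    simp only [smul_mul_assoc, mul_smul_comm, smul_smul]
    rw [← mul_assoc, ← sq]
    norm_num
  have hR : Quaternion.im q * (Quaternion.im q * (-(Quaternion.im q)⁻¹ *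
        ((2 * (n : ℝ)) • q ^ (n - 1) + (Quaternion.im q)⁻¹ * ((star q) ^ n - q ^ n))))
      = -((n : ℝ) • ((q - star q) * q ^ (n - 1)) + ((star q) ^ n - q ^ n)) := by
    rw [neg_mul, mul_neg, mul_neg, ← mul_assoc (Quaternion.im q) (Quaternion.im q)⁻¹,
      mul_inv_cancel₀ hq, one_mul, mul_add,
      ← mul_assoc (Quaternion.im q) (Quaternion.im q)⁻¹, mul_inv_cancel₀ hq, one_mul,
      mul_smul_comm, him, smul_mul_assoc, smul_smul]
    have h2 : 2 * (n : ℝ) * 2⁻¹ = (n : ℝ) := by ring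
    rw [h2]
  rw [hLside, hR, hkey, ← Nat.cast_smul_eq_nsmul ℝ n ((q - star q) * q ^ (n - 1))]
  abel
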